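/- arXiv:2208.13576 — 2 statements merged into one kernel-verified Lean document; each statement's English description precedes it below -/
import Mathlib

section
/- Under the stated setting together with Assumption (Sym), if b ∈ X satisfies ‖b‖_{X_Q} = 1 and the norm function ‖·‖_{X_Q} : X → ℝ is Fréchet differentiable at b, then the eigenspace ker(I − T_b) = {ω ∈ H : T_b ω = ω} is one-dimensional over 𝕂. -/
open NormedSpace Filter Topology

noncomputable section

/-- The setting of Coifman–Lions–Meyer–Semmes-type quadratic operators:
`X` is a real Banach space, `H` a Hilbert space over `𝕜 ∈ {ℝ, ℂ}`,
`T` is a bilinear map `X** × H → H` satisfying assumption (A1)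
(two-sided norm bounds and compactness of `T_b` for `b` in the canonical
image of `X`) and assumption (A2) (`T_b` self-adjoint with norm equal to the
supremum of `⟨T_b f, f⟩` over the unit sphere), together with the quadratic
map `Q : H → X*` determined by `⟨a, Qω⟩ = ⟨T_a ω, ω⟩` for `a ∈ X`, and its
Gâteaux derivative `Q'` determined by `⟨a, Q'_ω γ⟩ = 2 Re ⟨T_a ω, γ⟩`. -/
structure CLMS (𝕜 X H : Type*) [RCLike 𝕜]
    [NormedAddCommGroup X] [NormedSpace ℝ X] [CompleteSpace X]
    [NormedAddCommGroup H] [InnerProductSpace 𝕜 H] [CompleteSpace H] where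
  T : StrongDual ℝ (StrongDual ℝ X) → (H →L[𝕜] H)
  T_add : ∀ (b₁ b₂ : StrongDual ℝ (StrongDual ℝ X)) (ω : H), T (b₁ + b₂) ω = T b₁ ω + T b₂ ω
  T_smul : ∀ (r : ℝ) (b : StrongDual ℝ (StrongDual ℝ X)) (ω : H), T (r • b) ω = (r : 𝕜) • T b ω
  c : ℝ
  C : ℝ
  c_pos : 0 < c
  c_le_C : c ≤ C
  lower : ∀ b : StrongDual ℝ (StrongDual ℝ X), c * ‖b‖ ≤ ‖T b‖
  upper : ∀ b : StrongDual ℝ (StrongDual ℝ X), ‖T b‖ ≤ C * ‖b‖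
  compact : ∀ a : X, IsCompactOperator (T (inclusionInDoubleDual ℝ X a))
  selfAdj : ∀ b : StrongDual ℝ (StrongDual ℝ X), IsSelfAdjoint (T b)
  norm_eq : ∀ b : StrongDual ℝ (StrongDual ℝ X),
    ‖T b‖ = sSup {r : ℝ | ∃ f : H, ‖f‖ = 1 ∧ RCLike.re (inner 𝕜 ((T b) f) f : 𝕜) = r}
  Q : H → StrongDual ℝ X
  hQ : ∀ (a : X) (ω : H),
    Q ω a = RCLike.re (inner 𝕜 ((T (inclusionInDoubleDual ℝ X a)) ω) ω : 𝕜)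
  Q' : H → H → StrongDual ℝ X
  hQ' : ∀ (a : X) (ω γ : H),
    Q' ω γ a = 2 * RCLike.re (inner 𝕜 ((T (inclusionInDoubleDual ℝ X a)) ω) γ : 𝕜)

namespace CLMS

variable {𝕜 X H : Type*} [RCLike 𝕜]
    [NormedAddCommGroup X] [NormedSpace ℝ X] [CompleteSpace X]
    [NormedAddCommGroup H] [InnerProductSpace 𝕜 H] [CompleteSpace H]

/-- The equivalent norm `‖b‖_{X_Q} := ‖T_b‖` on `X`. -/
def normQ (S : CLMS 𝕜 X H) (b : X) : ℝ := ‖S.T (inclusionInDoubleDual ℝ X b)‖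

/-- The dual norm `‖f‖_{X_Q*} := sup {⟨b, f⟩ : b ∈ X, ‖b‖_{X_Q} ≤ 1}` on `X*`. -/
def dualNormQ (S : CLMS 𝕜 X H) (f : StrongDual ℝ X) : ℝ :=
  sSup {r : ℝ | ∃ b : X, S.normQ b ≤ 1 ∧ f b = r}

/-- The set `𝒜 = {ω ∈ H : ‖ω‖ = 1, ‖Qω‖_{X_Q*} = 1}`. -/
def A (S : CLMS 𝕜 X H) : Set H := {ω : H | ‖ω‖ = 1 ∧ S.dualNormQ (S.Q ω) = 1}

/-- The duality mapping `D(b) = {h ∈ X* : ‖h‖_{X_Q*} = 1, ⟨b, h⟩ = 1}`. -/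
def D (S : CLMS 𝕜 X H) (b : X) : Set (StrongDual ℝ X) :=
  {h : StrongDual ℝ X | S.dualNormQ h = 1 ∧ h b = 1}

/-- `ω` is a minimum norm solution (of `Qγ = Qω`). -/
def MinNormSol (S : CLMS 𝕜 X H) (ω : H) : Prop :=
  ∀ γ : H, S.Q γ = S.Q ω → ‖ω‖ ≤ ‖γ‖

/-- Assumption (Sym): if `ω, γ ∈ 𝒜` have `Qω = Qγ`, then `Q'_ω (c γ) ≠ 0`
for some unimodular `c ∈ 𝕜`. -/
def Sym (S : CLMS 𝕜 X H) : Prop :=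
  ∀ ω ∈ S.A, ∀ γ ∈ S.A, S.Q ω = S.Q γ → ∃ c : 𝕜, ‖c‖ = 1 ∧ S.Q' ω (c • γ) ≠ 0

/-- Assumption (A3): the canonical pairing of `b ∈ X**` with `Qω ∈ X*`
equals `⟨T_b ω, ω⟩`. -/
def A3 (S : CLMS 𝕜 X H) : Prop :=
  ∀ (b : StrongDual ℝ (StrongDual ℝ X)) (ω : H), b (S.Q ω) = RCLike.re (inner 𝕜 ((S.T b) ω) ω : 𝕜)

end CLMS

/-!
Every unit vector `γ` with `T_b γ = γ` makes `Qγ` a support functional of `‖·‖_{X_Q}` at `b`: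
`⟨x, Qγ⟩ ≤ ‖x‖_{X_Q}` with equality at `x = b`. Differentiability at `b` forces every such
support functional to be the derivative `L`, so `Qγ = ‖γ‖² L` on the whole eigenspace. Comparing
`Q(ω + γ)` with `Qω + Qγ + Q'_ω γ` for two orthogonal eigenvectors shows `Q'_ω γ = 0`, which
(Sym) forbids unless `γ = 0`. An eigenvector exists because `T_b` is compact and its numerical
range reaches `‖T_b‖ = 1`.
-/

open RCLike

section FixedPoint

variable {𝕜 E : Type*} [RCLike 𝕜]

theorem IsCompactOperator.exists_fixedPoint_of_tendsto_sub [NormedAddCommGroup E]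
    [NormedSpace 𝕜 E] {T : E →L[𝕜] E} (hT : IsCompactOperator T) {f : ℕ → E}
    (hf : ∀ n, ‖f n‖ = 1) (hlim : Tendsto (fun n ↦ T (f n) - f n) atTop (𝓝 0)) :
    ∃ x, ‖x‖ = 1 ∧ T x = x := by
  obtain ⟨K, hK, hTK⟩ := hT.image_closedBall_subset_compact 1
  have hmem : ∀ n, T (f n) ∈ K := fun n ↦
    hTK ⟨f n, mem_closedBall_zero_iff.mpr (hf n).le, rfl⟩
  obtain ⟨y, -, φ, hφ, hTy⟩ := hK.tendsto_subseq hmem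
  have hfy : Tendsto (fun n ↦ f (φ n)) atTop (𝓝 y) := by
    simpa using hTy.sub (hlim.comp hφ.tendsto_atTop)
  refine ⟨y, tendsto_nhds_unique hfy.norm (by simp [hf]), ?_⟩
  exact tendsto_nhds_unique ((T.continuous.tendsto y).comp hfy) hTy

variable [NormedAddCommGroup E] [InnerProductSpace 𝕜 E]

theorem ContinuousLinearMap.norm_apply_sub_self_sq_le {T : E →L[𝕜] E} (hT : ‖T‖ ≤ 1)
    (f : E) : ‖T f - f‖ ^ 2 ≤ 2 * ‖f‖ ^ 2 - 2 * re (inner 𝕜 (T f) f) := by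
  have hTf : ‖T f‖ ≤ ‖f‖ := (T.le_opNorm f).trans (mul_le_of_le_one_left (norm_nonneg f) hT)
  rw [norm_sub_sq (𝕜 := 𝕜)]
  nlinarith [norm_nonneg (T f)]

theorem ContinuousLinearMap.exists_fixedPoint_of_sSup_re_inner_eq_one {T : E →L[𝕜] E}
    (hT : IsCompactOperator T) (hnorm : ‖T‖ ≤ 1)
    (hsup : sSup {r : ℝ | ∃ f : E, ‖f‖ = 1 ∧ re (inner 𝕜 (T f) f) = r} = 1) :
    ∃ x, ‖x‖ = 1 ∧ T x = x := by
  set R := {r : ℝ | ∃ f : E, ‖f‖ = 1 ∧ re (inner 𝕜 (T f) f) = r}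
  have hR : R.Nonempty := by
    by_contra h
    rw [Set.not_nonempty_iff_eq_empty.mp h, Real.sSup_empty] at hsup
    exact zero_ne_one hsup
  have hbdd : BddAbove R := by
    refine ⟨1, ?_⟩
    rintro _ ⟨f, hf, rfl⟩
    calc re (inner 𝕜 (T f) f) ≤ ‖T f‖ * ‖f‖ := (re_le_norm _).trans (norm_inner_le_norm _ _)
      _ ≤ ‖T‖ * ‖f‖ * ‖f‖ := by gcongr; exact T.le_opNorm f
      _ ≤ 1 := by rw [hf]; simpa using hnorm
  obtain ⟨u, -, hu, huR⟩ := exists_seq_tendsto_sSup hR hbdd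
  choose f hf hfu using huR
  refine hT.exists_fixedPoint_of_tendsto_sub hf ?_
  have hsq : Tendsto (fun n ↦ 2 * ‖f n‖ ^ 2 - 2 * re (inner 𝕜 (T (f n)) (f n))) atTop (𝓝 0) := by
    simp only [hf, hfu, one_pow, mul_one]
    simpa [hsup] using (hu.const_mul 2).const_sub 2
  rw [tendsto_zero_iff_norm_tendsto_zero]
  refine squeeze_zero (fun n ↦ norm_nonneg _) (fun n ↦ ?_) (by simpa using hsq.sqrt)
  exact Real.le_sqrt_of_sq_le (T.norm_apply_sub_self_sq_le hnorm (f n))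

end FixedPoint

theorem ContinuousLinearMap.eq_fderiv_of_eventually_le_of_eq {E : Type*} [NormedAddCommGroup E]
    [NormedSpace ℝ E] {g : E → ℝ} {φ : StrongDual ℝ E} {b : E} (hg : DifferentiableAt ℝ g b)
    (hle : ∀ᶠ x in 𝓝 b, φ x ≤ g x) (heq : φ b = g b) : φ = fderiv ℝ g b := by
  have hmin : IsLocalMin (fun x ↦ g x - φ x) b := by
    filter_upwards [hle] with x hx
    linarith
  have h0 := hmin.fderiv_eq_zero
  rw [fderiv_fun_sub hg φ.differentiableAt, φ.fderiv, sub_eq_zero] at h0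
  exact h0.symm

namespace CLMS

variable {𝕜 X H : Type*} [RCLike 𝕜]
    [NormedAddCommGroup X] [NormedSpace ℝ X] [CompleteSpace X]
    [NormedAddCommGroup H] [InnerProductSpace 𝕜 H] [CompleteSpace H]
    (S : CLMS 𝕜 X H) {b : X}

theorem exists_fixed_of_normQ_eq_one (hb : S.normQ b = 1) :
    ∃ ω : H, ‖ω‖ = 1 ∧ S.T (inclusionInDoubleDual ℝ X b) ω = ω :=
  ContinuousLinearMap.exists_fixedPoint_of_sSup_re_inner_eq_one (S.compact b) hb.le
    ((S.norm_eq _).symm.trans hb)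

theorem Q_apply_le (γ : H) (x : X) : S.Q γ x ≤ S.normQ x * ‖γ‖ ^ 2 := by
  rw [S.hQ]
  calc re (inner 𝕜 (S.T (inclusionInDoubleDual ℝ X x) γ) γ)
      ≤ ‖S.T (inclusionInDoubleDual ℝ X x) γ‖ * ‖γ‖ :=
        (re_le_norm _).trans (norm_inner_le_norm _ _)
    _ ≤ ‖S.T (inclusionInDoubleDual ℝ X x)‖ * ‖γ‖ * ‖γ‖ := by gcongr; exact (S.T _).le_opNorm γ
    _ = S.normQ x * ‖γ‖ ^ 2 := by rw [normQ]; ring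

theorem Q_apply_of_fixed {γ : H} (hγ : S.T (inclusionInDoubleDual ℝ X b) γ = γ) :
    S.Q γ b = ‖γ‖ ^ 2 := by
  rw [S.hQ, hγ, inner_self_eq_norm_sq]

theorem Q_add_apply (u w : H) (a : X) : S.Q (u + w) a = S.Q u a + S.Q w a + S.Q' u w a := by
  have hsymm := ContinuousLinearMap.isSelfAdjoint_iff_isSymmetric.mp
    (S.selfAdj (inclusionInDoubleDual ℝ X a))
  have hconj : inner 𝕜 (S.T (inclusionInDoubleDual ℝ X a) w) u
      = starRingEnd 𝕜 (inner 𝕜 (S.T (inclusionInDoubleDual ℝ X a) u) w) :=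
    (hsymm w u).trans (inner_conj_symm w _).symm
  rw [S.hQ, S.hQ, S.hQ, S.hQ', map_add, inner_add_left, inner_add_right, inner_add_right, hconj]
  simp only [map_add, conj_re]
  ring

theorem mem_A_of_fixed (hb : S.normQ b = 1) {γ : H} (hγ1 : ‖γ‖ = 1)
    (hγ : S.T (inclusionInDoubleDual ℝ X b) γ = γ) : γ ∈ S.A := by
  refine ⟨hγ1, IsGreatest.csSup_eq ⟨⟨b, hb.le, by rw [S.Q_apply_of_fixed hγ, hγ1, one_pow]⟩, ?_⟩⟩
  rintro _ ⟨x, hx, rfl⟩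
  simpa [hγ1] using (S.Q_apply_le γ x).trans (by simpa [hγ1] using hx)

variable (hb : S.normQ b = 1) (hdiff : DifferentiableAt ℝ S.normQ b)
include hb hdiff

theorem Q_eq_of_fixed {γ : H} (hγ : S.T (inclusionInDoubleDual ℝ X b) γ = γ) :
    S.Q γ = ‖γ‖ ^ 2 • fderiv ℝ S.normQ b := by
  rw [← fderiv_const_mul hdiff]
  refine ContinuousLinearMap.eq_fderiv_of_eventually_le_of_eq (hdiff.const_mul _)
    (Eventually.of_forall fun x ↦ ?_) ?_
  · simpa [mul_comm] using S.Q_apply_le γ x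
  · simp [S.Q_apply_of_fixed hγ, hb]

theorem Q'_eq_of_fixed {ω γ : H} (hω : S.T (inclusionInDoubleDual ℝ X b) ω = ω)
    (hγ : S.T (inclusionInDoubleDual ℝ X b) γ = γ) :
    S.Q' ω γ = (2 * re (inner 𝕜 ω γ)) • fderiv ℝ S.normQ b := by
  have hωγ : S.T (inclusionInDoubleDual ℝ X b) (ω + γ) = ω + γ := by rw [map_add, hω, hγ]
  ext a
  have hadd := S.Q_add_apply ω γ a
  rw [S.Q_eq_of_fixed hb hdiff hωγ, S.Q_eq_of_fixed hb hdiff hω, S.Q_eq_of_fixed hb hdiff hγ,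
    norm_add_sq (𝕜 := 𝕜)] at hadd
  simp only [FunLike.coe_smul, Pi.smul_apply, smul_eq_mul] at hadd ⊢
  linarith

theorem eq_zero_of_fixed_of_inner_eq_zero (hSym : S.Sym) {ω γ : H} (hω1 : ‖ω‖ = 1)
    (hω : S.T (inclusionInDoubleDual ℝ X b) ω = ω) (hγ : S.T (inclusionInDoubleDual ℝ X b) γ = γ)
    (hperp : inner 𝕜 ω γ = 0) : γ = 0 := by
  by_contra hγ0
  set γ' : H := (‖γ‖⁻¹ : 𝕜) • γ
  have hγ'1 : ‖γ'‖ = 1 := norm_smul_inv_norm hγ0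
  have hγ' : S.T (inclusionInDoubleDual ℝ X b) γ' = γ' := by rw [map_smul, hγ]
  have hQ : S.Q ω = S.Q γ' := by
    rw [S.Q_eq_of_fixed hb hdiff hω, S.Q_eq_of_fixed hb hdiff hγ', hω1, hγ'1]
  obtain ⟨c, -, hc⟩ := hSym ω (S.mem_A_of_fixed hb hω1 hω) γ' (S.mem_A_of_fixed hb hγ'1 hγ') hQ
  have hcγ' : S.T (inclusionInDoubleDual ℝ X b) (c • γ') = c • γ' := by rw [map_smul, hγ']
  apply hc
  rw [S.Q'_eq_of_fixed hb hdiff hω hcγ']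
  simp [γ', inner_smul_right, hperp]

end CLMS

theorem stmt_14_general {𝕜 X H : Type*} [RCLike 𝕜]
    [NormedAddCommGroup X] [NormedSpace ℝ X] [CompleteSpace X]
    [NormedAddCommGroup H] [InnerProductSpace 𝕜 H] [CompleteSpace H]
    (S : CLMS 𝕜 X H) (hSym : S.Sym) (b : X) (hb : S.normQ b = 1)
    (hdiff : DifferentiableAt ℝ S.normQ b) :
    ∃ ω : H, ω ≠ 0 ∧
      {γ : H | S.T (inclusionInDoubleDual ℝ X b) γ = γ} =
        {γ : H | ∃ c : 𝕜, γ = c • ω} := by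
  obtain ⟨ω, hω1, hω⟩ := S.exists_fixed_of_normQ_eq_one hb
  refine ⟨ω, norm_ne_zero_iff.mp (by rw [hω1]; exact one_ne_zero), Set.ext fun γ ↦ ⟨?_, ?_⟩⟩
  · intro (hγ : S.T (inclusionInDoubleDual ℝ X b) γ = γ)
    refine ⟨inner 𝕜 ω γ, sub_eq_zero.mp (S.eq_zero_of_fixed_of_inner_eq_zero hb hdiff hSym hω1
      hω ?_ ?_)⟩
    · rw [map_sub, map_smul, hγ, hω]
    · rw [inner_sub_right, inner_smul_right, inner_self_eq_norm_sq_to_K, hω1]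
      simp
  · rintro ⟨c, rfl⟩
    exact (map_smul _ c ω).trans (by rw [hω])

/-- under (Sym), if `‖·‖_{X_Q}` is Fréchet differentiable at a
unit-sphere point `b`, then `ker (I - T_b)` is one-dimensional over `𝕜`. -/
theorem stmt_14 {𝕜 X H : Type*} [RCLike 𝕜]
    [NormedAddCommGroup X] [NormedSpace ℝ X] [CompleteSpace X]
    [TopologicalSpace.SeparableSpace (StrongDual ℝ X)]
    [NormedAddCommGroup H] [InnerProductSpace 𝕜 H] [CompleteSpace H]
    (S : CLMS 𝕜 X H) (hSym : S.Sym) (b : X) (hb : S.normQ b = 1)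
    (hdiff : DifferentiableAt ℝ S.normQ b) :
    ∃ ω : H, ω ≠ 0 ∧
      {γ : H | S.T (inclusionInDoubleDual ℝ X b) γ = γ} =
        {γ : H | ∃ c : 𝕜, γ = c • ω} :=
  stmt_14_general S hSym b hb hdiff
end
end

section
/- Under the stated setting, the norm and relative weak* topologies coincide on Q(𝒜): if ω_j ∈ 𝒜 for all j, ω ∈ 𝒜, and ⟨a, Qω_j⟩ → ⟨a, Qω⟩ for every a ∈ X, then ‖Qω_j − Qω‖_{X_Q*} → 0. -/
open NormedSpace Filter Topology

noncomputable section

/-!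
Along a subsequence, `ω_k` converges weakly to some `z` with `‖z‖ ≤ 1`. Every `T_a` with `a ∈ X`
is compact, so `T_a ω_k → T_a z` in norm and therefore `⟨a, Qω_k⟩ → ⟨a, Qz⟩`; hence `Qz = Qw`
and `1 = ‖Qw‖_{X_Q*} ≤ ‖z‖²`. Thus `‖z‖ = 1 = ‖ω_k‖`, and in a Hilbert space weak convergence
together with convergence of the norms is norm convergence. Finally `Q` is locally Lipschitz:
`‖Qγ - Qδ‖_{X_Q*} ≤ ‖γ - δ‖ (‖γ‖ + ‖δ‖)`.
-/

open scoped InnerProductSpace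

section Hilbert

open InnerProductSpace RCLike

variable {𝕜 E F : Type*} [RCLike 𝕜] [NormedAddCommGroup E] [InnerProductSpace 𝕜 E]
  [NormedAddCommGroup F] [InnerProductSpace 𝕜 F]

theorem exists_subseq_tendsto_inner_of_norm_le [CompleteSpace E] {u : ℕ → E} {R : ℝ}
    (hu : ∀ k, ‖u k‖ ≤ R) :
    ∃ z : E, ‖z‖ ≤ R ∧ ∃ φ : ℕ → ℕ, StrictMono φ ∧
      ∀ x, Tendsto (fun k => ⟪u (φ k), x⟫_𝕜) atTop (𝓝 ⟪z, x⟫_𝕜) := by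
  -- Sequential Banach–Alaoglu in the dual of the separable closed span `K` of the sequence; the
  -- limit functional is represented by `z ∈ K`, and test vectors are projected onto `K`.
  set K : Submodule 𝕜 E := (Submodule.span 𝕜 (Set.range u)).topologicalClosure
  have : IsClosed (K : Set E) := Submodule.isClosed_topologicalClosure _
  have : TopologicalSpace.SeparableSpace K :=
    (Set.countable_range u).isSeparable.span.closure.separableSpace
  have hu_mem : ∀ k, u k ∈ K := fun k =>
    Submodule.le_topologicalClosure _ (Submodule.subset_span ⟨k, rfl⟩)
  let f : ℕ → WeakDual 𝕜 K := fun k => StrongDual.toWeakDual (toDual 𝕜 K ⟨u k, hu_mem k⟩)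
  have hf : ∀ k, f k ∈ WeakDual.toStrongDual ⁻¹' Metric.closedBall 0 R := by
    simpa [f] using hu
  obtain ⟨ℓ, hℓ, φ, hφ, hlim⟩ := WeakDual.isSeqCompact_closedBall 𝕜 K 0 R hf
  set z : K := (toDual 𝕜 K).symm (WeakDual.toStrongDual ℓ)
  have hz : ∀ y : K, ℓ y = ⟪z, y⟫_𝕜 := fun y => toDual_symm_apply.symm
  refine ⟨z, ?_, φ, hφ, fun x => ?_⟩
  · change ‖z‖ ≤ R
    simpa [z] using hℓ
  · have := ((WeakDual.eval_continuous (K.orthogonalProjectionOnto x)).tendsto ℓ).comp hlim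
    simpa [Function.comp_def, f, hz] using this

theorem IsCompactOperator.tendsto_apply_of_tendsto_inner [CompleteSpace E] [CompleteSpace F]
    {T : E →L[𝕜] F} (hT : IsCompactOperator T) {u : ℕ → E} {z : E} {R : ℝ}
    (hu : ∀ k, ‖u k‖ ≤ R) (hw : ∀ x, Tendsto (fun k => ⟪u k, x⟫_𝕜) atTop (𝓝 ⟪z, x⟫_𝕜)) :
    Tendsto (fun k => T (u k)) atTop (𝓝 (T z)) := by
  have hK : IsCompact (closure ((T : E →ₗ[𝕜] F) '' Metric.closedBall 0 R)) :=
    hT.isCompact_closure_image_closedBall R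
  refine tendsto_of_subseq_tendsto fun ns hns => ?_
  obtain ⟨y, -, ms, hms, hy⟩ := hK.tendsto_subseq fun k =>
    subset_closure ⟨u (ns k), mem_closedBall_zero_iff.2 (hu _), rfl⟩
  have hyz : y = T z := ext_inner_right 𝕜 fun x =>
    tendsto_nhds_unique (hy.inner tendsto_const_nhds) <| by
      simpa [Function.comp_def, ContinuousLinearMap.adjoint_inner_right] using
        (hw (T.adjoint x)).comp (hns.comp hms.tendsto_atTop)
  exact ⟨ms, hyz ▸ hy⟩

theorem tendsto_inner_of_tendsto_inner_of_tendsto {u p : ℕ → E} {z p₀ : E} {R : ℝ}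
    (hu : ∀ k, ‖u k‖ ≤ R) (hw : ∀ x, Tendsto (fun k => ⟪u k, x⟫_𝕜) atTop (𝓝 ⟪z, x⟫_𝕜))
    (hp : Tendsto p atTop (𝓝 p₀)) :
    Tendsto (fun k => ⟪u k, p k⟫_𝕜) atTop (𝓝 ⟪z, p₀⟫_𝕜) := by
  have hsmall : Tendsto (fun k => ⟪u k, p k - p₀⟫_𝕜) atTop (𝓝 0) := by
    refine squeeze_zero_norm (fun k => (norm_inner_le_norm _ _).trans
      (mul_le_mul_of_nonneg_right (hu k) (norm_nonneg _))) ?_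
    simpa using (tendsto_iff_norm_sub_tendsto_zero.1 hp).const_mul R
  simpa [inner_sub_right] using hsmall.add (hw p₀)

theorem tendsto_of_tendsto_inner_of_tendsto_norm {u : ℕ → E} {z : E}
    (hw : ∀ x, Tendsto (fun k => ⟪u k, x⟫_𝕜) atTop (𝓝 ⟪z, x⟫_𝕜))
    (hn : Tendsto (fun k => ‖u k‖) atTop (𝓝 ‖z‖)) : Tendsto u atTop (𝓝 z) := by
  have hsq : Tendsto (fun k => ‖u k - z‖ ^ 2) atTop (𝓝 0) := by
    have := ((hn.pow 2).sub (((continuous_re.tendsto _).comp (hw z)).const_mul 2)).add_const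
      (‖z‖ ^ 2)
    have hlim : ‖z‖ ^ 2 - 2 * re ⟪z, z⟫_𝕜 + ‖z‖ ^ 2 = 0 := by
      rw [inner_self_eq_norm_sq]
      ring
    simpa only [norm_sub_sq (𝕜 := 𝕜), hlim, Function.comp_def] using this
  rw [tendsto_iff_norm_sub_tendsto_zero]
  simpa using hsq.sqrt

theorem ContinuousLinearMap.abs_re_inner_self_sub_le (A : E →L[𝕜] E) (x y : E) :
    |re ⟪A x, x⟫_𝕜 - re ⟪A y, y⟫_𝕜| ≤ ‖A‖ * ‖x - y‖ * (‖x‖ + ‖y‖) := by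
  have hsplit : ⟪A x, x⟫_𝕜 - ⟪A y, y⟫_𝕜 = ⟪A (x - y), x⟫_𝕜 + ⟪A y, x - y⟫_𝕜 := by
    simp only [map_sub, inner_sub_left, inner_sub_right]
    ring
  calc |re ⟪A x, x⟫_𝕜 - re ⟪A y, y⟫_𝕜|
      ≤ ‖⟪A (x - y), x⟫_𝕜‖ + ‖⟪A y, x - y⟫_𝕜‖ := by
        rw [← map_sub, hsplit, map_add]
        exact (abs_add_le _ _).trans (add_le_add (abs_re_le_norm _) (abs_re_le_norm _))
    _ ≤ ‖A‖ * ‖x - y‖ * ‖x‖ + ‖A‖ * ‖y‖ * ‖x - y‖ := by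
        gcongr <;> exact (norm_inner_le_norm _ _).trans (by gcongr; exact A.le_opNorm _)
    _ = ‖A‖ * ‖x - y‖ * (‖x‖ + ‖y‖) := by ring

end Hilbert

namespace CLMS

open RCLike

variable {𝕜 X H : Type*} [RCLike 𝕜] [NormedAddCommGroup X] [NormedSpace ℝ X] [CompleteSpace X]
  [NormedAddCommGroup H] [InnerProductSpace 𝕜 H] [CompleteSpace H] (S : CLMS 𝕜 X H)

theorem T_zero : S.T 0 = 0 := by
  ext ω
  simpa using S.T_smul 0 0 ω

theorem normQ_zero : S.normQ 0 = 0 := by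
  rw [normQ, map_zero, S.T_zero, norm_zero]

theorem Q_zero : S.Q 0 = 0 := by
  ext a
  simp [S.hQ]

theorem dualNormQ_nonneg (f : StrongDual ℝ X) : 0 ≤ S.dualNormQ f :=
  Real.sSup_nonneg' ⟨0, ⟨0, by rw [S.normQ_zero]; exact zero_le_one, map_zero f⟩, le_rfl⟩

theorem dualNormQ_le {f : StrongDual ℝ X} {M : ℝ} (hM : 0 ≤ M)
    (h : ∀ b, S.normQ b ≤ 1 → f b ≤ M) : S.dualNormQ f ≤ M :=
  Real.sSup_le (fun _ ⟨b, hb, hfb⟩ => hfb ▸ h b hb) hM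

theorem dualNormQ_Q_sub_Q_le (x y : H) :
    S.dualNormQ (S.Q x - S.Q y) ≤ ‖x - y‖ * (‖x‖ + ‖y‖) :=
  S.dualNormQ_le (by positivity) fun b hb => by
    rw [sub_apply, S.hQ, S.hQ]
    calc _ ≤ |_| := le_abs_self _
      _ ≤ S.normQ b * ‖x - y‖ * (‖x‖ + ‖y‖) := (S.T _).abs_re_inner_self_sub_le x y
      _ ≤ ‖x - y‖ * (‖x‖ + ‖y‖) := by
        rw [mul_assoc]
        exact mul_le_of_le_one_left (by positivity) hb

theorem dualNormQ_Q_le (z : H) : S.dualNormQ (S.Q z) ≤ ‖z‖ ^ 2 := by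
  simpa [S.Q_zero, sq] using S.dualNormQ_Q_sub_Q_le z 0

theorem tendsto_Q_apply_of_tendsto_inner {u : ℕ → H} {z : H} {R : ℝ} (hu : ∀ k, ‖u k‖ ≤ R)
    (hw : ∀ x, Tendsto (fun k => ⟪u k, x⟫_𝕜) atTop (𝓝 ⟪z, x⟫_𝕜)) (a : X) :
    Tendsto (fun k => S.Q (u k) a) atTop (𝓝 (S.Q z a)) := by
  have hT := (S.compact a).tendsto_apply_of_tendsto_inner hu hw
  simp_rw [S.hQ, inner_re_symm (𝕜 := 𝕜) (S.T _ _)]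
  exact (continuous_re.tendsto _).comp (tendsto_inner_of_tendsto_inner_of_tendsto hu hw hT)

theorem tendsto_dualNormQ_Q_sub {u : ℕ → H} {z : H} (h : Tendsto u atTop (𝓝 z)) :
    Tendsto (fun k => S.dualNormQ (S.Q (u k) - S.Q z)) atTop (𝓝 0) := by
  have hlim : Tendsto (fun k => ‖u k - z‖ * (‖u k‖ + ‖z‖)) atTop (𝓝 0) := by
    simpa using (tendsto_iff_norm_sub_tendsto_zero.1 h).mul (h.norm.add tendsto_const_nhds)
  exact squeeze_zero (fun _ => S.dualNormQ_nonneg _) (fun _ => S.dualNormQ_Q_sub_Q_le _ _) hlim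

end CLMS

theorem stmt_17_general {𝕜 X H : Type*} [RCLike 𝕜]
    [NormedAddCommGroup X] [NormedSpace ℝ X] [CompleteSpace X]
    [NormedAddCommGroup H] [InnerProductSpace 𝕜 H] [CompleteSpace H]
    (S : CLMS 𝕜 X H) (ω : ℕ → H) (w : H) (hω : ∀ j, ω j ∈ S.A) (hw : w ∈ S.A)
    (hconv : ∀ a : X, Tendsto (fun j => S.Q (ω j) a) atTop (𝓝 (S.Q w a))) :
    Tendsto (fun j => S.dualNormQ (S.Q (ω j) - S.Q w)) atTop (𝓝 0) := by
  refine tendsto_of_subseq_tendsto fun ns hns => ?_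
  have hnorm : ∀ j, ‖ω j‖ = 1 := fun j => (hω j).1
  have hbdd : ∀ k, ‖ω (ns k)‖ ≤ 1 := fun k => (hnorm _).le
  obtain ⟨z, hz_le, φ, hφ, hweak⟩ := exists_subseq_tendsto_inner_of_norm_le (𝕜 := 𝕜) hbdd
  have hQ : S.Q w = S.Q z := ContinuousLinearMap.ext fun a =>
    tendsto_nhds_unique ((hconv a).comp (hns.comp hφ.tendsto_atTop))
      (S.tendsto_Q_apply_of_tendsto_inner (fun k => hbdd (φ k)) hweak a)
  have hz : ‖z‖ = 1 := by
    have := S.dualNormQ_Q_le z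
    rw [← hQ, hw.2] at this
    nlinarith [norm_nonneg z]
  have hstrong : Tendsto (fun k => ω (ns (φ k))) atTop (𝓝 z) :=
    tendsto_of_tendsto_inner_of_tendsto_norm hweak (by simp [hnorm, hz])
  refine ⟨φ, ?_⟩
  rw [hQ]
  exact S.tendsto_dualNormQ_Q_sub hstrong

/-- on `Q(𝒜)`, weak* sequential convergence implies convergence
in the norm `‖·‖_{X_Q*}`. -/
theorem stmt_17 {𝕜 X H : Type*} [RCLike 𝕜]
    [NormedAddCommGroup X] [NormedSpace ℝ X] [CompleteSpace X]
    [TopologicalSpace.SeparableSpace (StrongDual ℝ X)]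
    [NormedAddCommGroup H] [InnerProductSpace 𝕜 H] [CompleteSpace H]
    (S : CLMS 𝕜 X H) (ω : ℕ → H) (w : H) (hω : ∀ j, ω j ∈ S.A) (hw : w ∈ S.A)
    (hconv : ∀ a : X, Tendsto (fun j => S.Q (ω j) a) atTop (𝓝 (S.Q w a))) :
    Tendsto (fun j => S.dualNormQ (S.Q (ω j) - S.Q w)) atTop (𝓝 0) :=
  stmt_17_general S ω w hω hw hconv
end
end
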